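/- arXiv:2601.09190 — 4 statements merged into one kernel-verified Lean document; each statement's English description precedes it below -/
import Mathlib

section
/- Existence for the stationary Oseen-type variational inequality (Lemma 3.1): Assume the Gelfand-triple setting and hypotheses (H1) and (H2). Let w ∈ V, f ∈ H, and let λ ≥ C_{θ₁,1/4}·‖w‖_V^{θ₁}, where C_{θ₁,1/4} is the constant from the rephrased form of (H1) with ε = 1/4. Then there exists u ∈ V such that λ·(u, v−u) + a(u, v−u) + ⟨B(w,u), v−u⟩ + φ(v) − φ(u) ≥ (f, v−u) for all v ∈ V. In particular, u ∈ D(∂φ). -/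
/-!
By (H1) with `ε = 1/4` and the choice of `λ`, the form
`L(u, z) = λ (ιu, ιz) + a(u, z) + ⟨B(w, u), z⟩` is coercive on `V`, so the inequality is a
Lions–Stampacchia problem with a convex term. For `ρ > 0` the proximal map of `ρ φ` exists
(`‖v - x‖² / (2ρ) + φ v` is strongly convex, so a minimising sequence is Cauchy by the
parallelogram law, and its limit is a minimiser by lower semicontinuity) and is nonexpansive.
With `A` and `g` the Riesz representatives of `L` and of `ℓ = (f, ι ·)`, and `ρ` small,
`u ↦ prox (u - ρ (A u - g))` is a contraction; its fixed point `u` solves the inequality,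
and `ℓ - L u` is a subgradient of `φ` at `u`.
-/

open Set Filter Topology
open scoped RealInnerProductSpace

theorem LowerSemicontinuous.le_of_tendsto_of_eventually_le {X ι γ : Type*}
    [TopologicalSpace X] [LinearOrder γ] [TopologicalSpace γ] [OrderTopology γ]
    [DenselyOrdered γ] {f : X → γ} (hf : LowerSemicontinuous f) {l : Filter ι} [l.NeBot]
    {x : ι → X} {p : X} (hx : Tendsto x l (𝓝 p)) {r : ι → γ} {r₀ : γ}
    (hr : Tendsto r l (𝓝 r₀)) (hle : ∀ᶠ i in l, f (x i) ≤ r i) : f p ≤ r₀ :=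
  le_of_forall_lt_imp_le_of_dense fun y hy =>
    ge_of_tendsto hr (((hx.eventually (hf p y hy)).and hle).mono fun _ h => (h.1.trans_le h.2).le)

namespace EReal

theorem toReal_le_of_le_coe {x : EReal} {r : ℝ} (h : x ≤ r) (hx : x ≠ ⊥) : x.toReal ≤ r := by
  simpa using toReal_le_toReal h hx (coe_ne_top r)

theorem le_toReal_of_coe_le {x : EReal} {r : ℝ} (h : (r : EReal) ≤ x) (hx : x ≠ ⊤) :
    r ≤ x.toReal := by
  simpa using toReal_le_toReal h (coe_ne_bot r) hx

theorem ne_top_of_coe_add_le {c : ℝ} {x y : EReal} (h : (c : EReal) + x ≤ y) (hy : y ≠ ⊤) :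
    x ≠ ⊤ := by
  rintro rfl
  exact hy (top_le_iff.mp (coe_add_top c ▸ h))

end EReal

theorem convexOn_toReal_of_ne_bot {E : Type*} [AddCommGroup E] [Module ℝ E] {φ : E → EReal}
    (hconv : ∀ x y : E, ∀ t : ℝ, 0 ≤ t → t ≤ 1 →
      φ (t • x + (1 - t) • y) ≤ (t : EReal) * φ x + ((1 - t : ℝ) : EReal) * φ y)
    (hbot : ∀ v, φ v ≠ ⊥) : ConvexOn ℝ {v | φ v ≠ ⊤} fun v => (φ v).toReal := by
  have hcoe : ∀ x y : E, φ x ≠ ⊤ → φ y ≠ ⊤ → ∀ t : ℝ, 0 ≤ t → t ≤ 1 →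
      φ (t • x + (1 - t) • y) ≤ ((t * (φ x).toReal + (1 - t) * (φ y).toReal : ℝ) : EReal) := by
    intro x y hx hy t ht0 ht1
    simpa only [EReal.coe_add, EReal.coe_mul, EReal.coe_toReal hx (hbot x),
      EReal.coe_toReal hy (hbot y)] using hconv x y t ht0 ht1
  refine ⟨fun x hx y hy a b ha hb hab => ?_, fun x hx y hy a b ha hb hab => ?_⟩
  all_goals obtain rfl : b = 1 - a := by linarith
  · exact ne_top_of_le_ne_top (EReal.coe_ne_top _) (hcoe x y hx hy a ha (by linarith))
  · exact EReal.toReal_le_of_le_coe (hcoe x y hx hy a ha (by linarith)) (hbot _)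

section

variable {V : Type*} [NormedAddCommGroup V]

/-- Minimised over `{v | φ v ≠ ⊤}`, where `toReal` is not junk, it defines the proximal point
of `x` for `ρ φ`. -/
noncomputable def moreauObjective (φ : V → EReal) (ρ : ℝ) (x v : V) : ℝ :=
  ‖v - x‖ ^ 2 / (2 * ρ) + (φ v).toReal

variable {φ : V → EReal} {ρ : ℝ} {x p : V}

theorem moreauObjective_lower_bound {C : ℝ} (hρ : 0 < ρ)
    (hlb : ∀ v : V, ((-(C * (‖v‖ + 1)) : ℝ) : EReal) ≤ φ v) {v : V} (hv : φ v ≠ ⊤) :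
    -(ρ * |C| ^ 2 / 2) - |C| * (‖x‖ + 1) ≤ moreauObjective φ ρ x v := by
  have hφv : -(|C| * (‖v‖ + 1)) ≤ (φ v).toReal :=
    (neg_le_neg (mul_le_mul_of_nonneg_right (le_abs_self C) (by positivity))).trans
      (EReal.le_toReal_of_coe_le (hlb v) hv)
  have htri : ‖v‖ ≤ ‖v - x‖ + ‖x‖ := norm_le_norm_sub_add v x
  have hsq : 0 ≤ (‖v - x‖ - ρ * |C|) ^ 2 / (2 * ρ) := by positivity
  have hexpand : (‖v - x‖ - ρ * |C|) ^ 2 / (2 * ρ)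
      = ‖v - x‖ ^ 2 / (2 * ρ) - |C| * ‖v - x‖ + ρ * |C| ^ 2 / 2 := by
    field_simp
    ring
  unfold moreauObjective
  nlinarith [abs_nonneg C]

variable [InnerProductSpace ℝ V]

theorem cauchySeq_of_midpoint_strongly_convex {s : Set V} {G : V → ℝ} {m c : ℝ} (hc : 0 < c)
    (hs : Convex ℝ s) (hm : ∀ v ∈ s, m ≤ G v)
    (hmid : ∀ u ∈ s, ∀ v ∈ s,
      G ((1 / 2 : ℝ) • u + (1 / 2 : ℝ) • v) + c * ‖u - v‖ ^ 2 ≤ (G u + G v) / 2)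
    {u : ℕ → V} (hu : ∀ n, u n ∈ s) (hG : ∀ n, G (u n) ≤ m + 1 / (n + 1)) : CauchySeq u := by
  refine cauchySeq_of_le_tendsto_0 (fun N : ℕ => √(1 / (N + 1) / c)) (fun n k N hn hk => ?_) ?_
  · have hmono : ∀ n : ℕ, N ≤ n → 1 / ((n : ℝ) + 1) ≤ 1 / (N + 1) := fun n hn =>
      one_div_le_one_div_of_le (by positivity) (by exact_mod_cast Nat.add_le_add_right hn 1)
    have hhalf : (0 : ℝ) ≤ 1 / 2 := by norm_num
    have hm_mid := hm _ (hs (hu n) (hu k) hhalf hhalf (by norm_num))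
    have hsq : ‖u n - u k‖ ^ 2 ≤ 1 / (N + 1) / c := by
      rw [le_div_iff₀ hc]
      linarith [hmid (u n) (hu n) (u k) (hu k), hG n, hG k, hmono n hn, hmono k hk]
    rw [dist_eq_norm]
    exact Real.le_sqrt_of_sq_le hsq
  · simpa using (tendsto_one_div_add_atTop_nhds_zero_nat.div_const c).sqrt

theorem moreauObjective_midpoint_add_le (hconv : ConvexOn ℝ {v | φ v ≠ ⊤} fun v => (φ v).toReal)
    (hρ : 0 < ρ) {u v : V} (hu : φ u ≠ ⊤) (hv : φ v ≠ ⊤) :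
    moreauObjective φ ρ x ((1 / 2 : ℝ) • u + (1 / 2 : ℝ) • v) + 1 / (8 * ρ) * ‖u - v‖ ^ 2 ≤
      (moreauObjective φ ρ x u + moreauObjective φ ρ x v) / 2 := by
  have hhalf : (0 : ℝ) ≤ 1 / 2 := by norm_num
  have hφ := hconv.2 hu hv hhalf hhalf (by norm_num)
  have hpar := parallelogram_law_with_norm ℝ (u - x) (v - x)
  have hmid : (1 / 2 : ℝ) • u + (1 / 2 : ℝ) • v - x = (1 / 2 : ℝ) • ((u - x) + (v - x)) := by
    module
  rw [show (u - x) - (v - x) = u - v by abel] at hpar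
  simp only [moreauObjective, hmid, norm_smul, smul_eq_mul] at hφ ⊢
  rw [Real.norm_of_nonneg hhalf]
  field_simp
  nlinarith

theorem exists_isMinOn_moreauObjective [CompleteSpace V] (hρ : 0 < ρ)
    (hconv : ConvexOn ℝ {v | φ v ≠ ⊤} fun v => (φ v).toReal) (hproper : ∃ v, φ v ≠ ⊤)
    (hbot : ∀ v, φ v ≠ ⊥) (hlsc : LowerSemicontinuous φ) {C : ℝ}
    (hlb : ∀ v : V, ((-(C * (‖v‖ + 1)) : ℝ) : EReal) ≤ φ v) (x : V) :
    ∃ p, φ p ≠ ⊤ ∧ IsMinOn (moreauObjective φ ρ x) {v | φ v ≠ ⊤} p := by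
  set G := moreauObjective φ ρ x
  set m := sInf (G '' {v | φ v ≠ ⊤})
  have hne : (G '' {v | φ v ≠ ⊤}).Nonempty := hproper.elim fun v hv => ⟨G v, v, hv, rfl⟩
  have hbdd : BddBelow (G '' {v | φ v ≠ ⊤}) :=
    ⟨_, forall_mem_image.2 fun v hv => moreauObjective_lower_bound hρ hlb hv⟩
  have hm : ∀ v, φ v ≠ ⊤ → m ≤ G v := fun v hv => csInf_le hbdd (mem_image_of_mem G hv)
  have hseq : ∀ n : ℕ, ∃ v, φ v ≠ ⊤ ∧ G v < m + 1 / (n + 1) := fun n => by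
    obtain ⟨_, ⟨v, hv, rfl⟩, hlt⟩ :=
      exists_lt_of_csInf_lt hne (lt_add_of_pos_right m (Nat.one_div_pos_of_nat (α := ℝ)))
    exact ⟨v, hv, hlt⟩
  choose u hu hGu using hseq
  obtain ⟨p, hp⟩ := cauchySeq_tendsto_of_complete <|
    cauchySeq_of_midpoint_strongly_convex (by positivity : 0 < 1 / (8 * ρ)) hconv.1 hm
      (fun u hu v hv => moreauObjective_midpoint_add_le hconv hρ hu hv) hu fun n => (hGu n).le
  set q := fun v : V => ‖v - x‖ ^ 2 / (2 * ρ)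
  have hr : Tendsto (fun n : ℕ => m + 1 / (n + 1) - q (u n)) atTop (𝓝 (m - q p)) := by
    have hq : Continuous q := by fun_prop
    simpa using (tendsto_one_div_add_atTop_nhds_zero_nat.const_add m).sub ((hq.tendsto p).comp hp)
  have hφp : φ p ≤ ((m - q p : ℝ) : EReal) := by
    refine hlsc.le_of_tendsto_of_eventually_le hp (continuous_coe_real_ereal.tendsto _ |>.comp hr)
      (Eventually.of_forall fun n => ?_)
    rw [← EReal.coe_toReal (hu n) (hbot _), Function.comp_apply, EReal.coe_le_coe_iff]
    linarith [hGu n, show G (u n) = q (u n) + (φ (u n)).toReal from rfl]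
  refine ⟨p, ne_top_of_le_ne_top (EReal.coe_ne_top _) hφp, fun v hv => (hm v hv).trans' ?_⟩
  have := EReal.toReal_le_of_le_coe hφp (hbot p)
  change q p + (φ p).toReal ≤ m
  linarith

/-- `p` is the proximal point of `x` for `ρ φ`, i.e. `(x - p) / ρ ∈ ∂φ(p)`. -/
def IsProx (φ : V → EReal) (ρ : ℝ) (x p : V) : Prop :=
  ∀ v, ((ρ⁻¹ * ⟪x - p, v - p⟫ : ℝ) : EReal) + φ p ≤ φ v

variable {x₁ x₂ p₁ p₂ : V}

theorem IsProx.ne_top (h : IsProx φ ρ x p) (hproper : ∃ v, φ v ≠ ⊤) : φ p ≠ ⊤ :=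
  let ⟨v, hv⟩ := hproper
  EReal.ne_top_of_coe_add_le (h v) hv

theorem IsProx.norm_sub_sq_le_inner (h₁ : IsProx φ ρ x₁ p₁) (h₂ : IsProx φ ρ x₂ p₂)
    (hρ : 0 < ρ) (hproper : ∃ v, φ v ≠ ⊤) (hbot : ∀ v, φ v ≠ ⊥) :
    ‖p₁ - p₂‖ ^ 2 ≤ ⟪x₁ - x₂, p₁ - p₂⟫ := by
  have e₁ := h₁ p₂
  have e₂ := h₂ p₁
  rw [← EReal.coe_toReal (h₁.ne_top hproper) (hbot p₁),
    ← EReal.coe_toReal (h₂.ne_top hproper) (hbot p₂), ← EReal.coe_add,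
    EReal.coe_le_coe_iff] at e₁ e₂
  have hmono : 0 ≤ ⟪(x₁ - p₁) - (x₂ - p₂), p₁ - p₂⟫ := by
    have h₁₂ : ⟪x₁ - p₁, p₂ - p₁⟫ = -⟪x₁ - p₁, p₁ - p₂⟫ := by rw [← inner_neg_right, neg_sub]
    have hsum := mul_nonneg hρ.le
      (by linarith : 0 ≤ -(ρ⁻¹ * ⟪x₁ - p₁, p₂ - p₁⟫ + ρ⁻¹ * ⟪x₂ - p₂, p₁ - p₂⟫))
    field_simp at hsum
    rw [inner_sub_left]
    linarith
  rw [show (x₁ - p₁) - (x₂ - p₂) = (x₁ - x₂) - (p₁ - p₂) by abel, inner_sub_left,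
    real_inner_self_eq_norm_sq] at hmono
  linarith

theorem IsProx.norm_sub_le (h₁ : IsProx φ ρ x₁ p₁) (h₂ : IsProx φ ρ x₂ p₂)
    (hρ : 0 < ρ) (hproper : ∃ v, φ v ≠ ⊤) (hbot : ∀ v, φ v ≠ ⊥) :
    ‖p₁ - p₂‖ ≤ ‖x₁ - x₂‖ := by
  have h := (h₁.norm_sub_sq_le_inner h₂ hρ hproper hbot).trans (real_inner_le_norm _ _)
  rw [sq] at h
  rcases (norm_nonneg (p₁ - p₂)).eq_or_lt with h0 | h0
  · rw [← h0]; exact norm_nonneg _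
  · exact le_of_mul_le_mul_right h h0

theorem IsProx.of_isMinOn (hconv : ConvexOn ℝ {v | φ v ≠ ⊤} fun v => (φ v).toReal)
    (hbot : ∀ v, φ v ≠ ⊥) (hρ : 0 < ρ) (hp : φ p ≠ ⊤)
    (hmin : IsMinOn (moreauObjective φ ρ x) {v | φ v ≠ ⊤} p) : IsProx φ ρ x p := by
  intro v
  by_cases hv : φ v = ⊤
  · simp [hv]
  rw [← EReal.coe_toReal hp (hbot p), ← EReal.coe_toReal hv (hbot v), ← EReal.coe_add,
    EReal.coe_le_coe_iff]
  set N := ‖v - p‖ ^ 2 / (2 * ρ)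
  -- first-order condition along the segment `t • v + (1 - t) • p`, then `t → 0⁺`
  have hsegment : ∀ t ∈ Ioo (0 : ℝ) 1,
      ρ⁻¹ * ⟪x - p, v - p⟫ + (φ p).toReal ≤ (φ v).toReal + t * N := by
    rintro t ⟨ht0, ht1⟩
    have hφt := hconv.2 hv hp ht0.le (sub_nonneg.2 ht1.le) (by ring)
    have hG : moreauObjective φ ρ x p ≤ moreauObjective φ ρ x (t • v + (1 - t) • p) :=
      hmin (hconv.1 hv hp ht0.le (sub_nonneg.2 ht1.le) (by ring))
    have hnorm : ‖t • v + (1 - t) • p - x‖ ^ 2 / (2 * ρ) =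
        ‖p - x‖ ^ 2 / (2 * ρ) + t * (ρ⁻¹ * ⟪p - x, v - p⟫) + t * (t * N) := by
      rw [show t • v + (1 - t) • p - x = (p - x) + t • (v - p) by module, norm_add_sq_real,
        real_inner_smul_right, norm_smul, mul_pow, Real.norm_eq_abs, sq_abs]
      simp only [N]
      field_simp
    have hinner : ⟪x - p, v - p⟫ = -⟪p - x, v - p⟫ := by rw [← inner_neg_left, neg_sub]
    simp only [moreauObjective, smul_eq_mul] at hG hφt
    rw [hnorm] at hG
    refine le_of_mul_le_mul_left ?_ ht0
    rw [hinner]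
    linarith
  have hlim : Tendsto (fun t => (φ v).toReal + t * N) (𝓝[>] 0) (𝓝 (φ v).toReal) :=
    ((continuous_const.add (continuous_id.mul continuous_const)).tendsto' 0 _ (by simp)).mono_left
      nhdsWithin_le_nhds
  exact ge_of_tendsto hlim (eventually_of_mem (Ioo_mem_nhdsGT one_pos) hsegment)

theorem exists_isProx [CompleteSpace V] (hconv : ConvexOn ℝ {v | φ v ≠ ⊤} fun v => (φ v).toReal)
    (hproper : ∃ v, φ v ≠ ⊤) (hbot : ∀ v, φ v ≠ ⊥) (hlsc : LowerSemicontinuous φ) {C : ℝ}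
    (hlb : ∀ v : V, ((-(C * (‖v‖ + 1)) : ℝ) : EReal) ≤ φ v) (hρ : 0 < ρ) (x : V) :
    ∃ p, IsProx φ ρ x p :=
  let ⟨p, hp, hmin⟩ := exists_isMinOn_moreauObjective hρ hconv hproper hbot hlsc hlb x
  ⟨p, .of_isMinOn hconv hbot hρ hp hmin⟩

theorem norm_sub_smul_le_of_coercive {A : V → V} {α M : ℝ} (hα : 0 < α) (hαM : α ≤ M)
    (hA : ∀ d, ‖A d‖ ≤ M * ‖d‖) (hcoer : ∀ d, α * ‖d‖ * ‖d‖ ≤ ⟪A d, d⟫) (d : V) :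
    ‖d - (α / M ^ 2) • A d‖ ≤ (1 - α ^ 2 / (2 * M ^ 2)) * ‖d‖ := by
  have hM : 0 < M := hα.trans_le hαM
  have hκ : 0 ≤ 1 - α ^ 2 / (2 * M ^ 2) := by
    rw [sub_nonneg, div_le_one (by positivity)]
    nlinarith
  rw [← pow_le_pow_iff_left₀ (norm_nonneg _) (by positivity) two_ne_zero,
    norm_sub_sq_real, real_inner_smul_right, norm_smul, Real.norm_of_nonneg (by positivity),
    real_inner_comm, mul_pow, mul_pow]
  have hAd : ‖A d‖ ^ 2 ≤ M ^ 2 * ‖d‖ ^ 2 := by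
    rw [← mul_pow]; exact pow_le_pow_left₀ (norm_nonneg _) (hA d) 2
  have hexpand : ‖d‖ ^ 2 - 2 * (α / M ^ 2 * ⟪A d, d⟫) + (α / M ^ 2) ^ 2 * ‖A d‖ ^ 2 ≤
      (1 - α ^ 2 / M ^ 2) * ‖d‖ ^ 2 := by
    have h1 : α * (α * ‖d‖ * ‖d‖) ≤ α * ⟪A d, d⟫ := mul_le_mul_of_nonneg_left (hcoer d) hα.le
    have h2 : α ^ 2 * ‖A d‖ ^ 2 ≤ α ^ 2 * (M ^ 2 * ‖d‖ ^ 2) :=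
      mul_le_mul_of_nonneg_left hAd (by positivity)
    field_simp
    nlinarith
  refine hexpand.trans (mul_le_mul_of_nonneg_right ?_ (by positivity))
  rw [show α ^ 2 / M ^ 2 = 2 * (α ^ 2 / (2 * M ^ 2)) by field_simp]
  nlinarith [sq_nonneg (α ^ 2 / (2 * M ^ 2))]

theorem IsCoercive.exists_variationalInequality [CompleteSpace V] {B : V →L[ℝ] V →L[ℝ] ℝ}
    (hB : IsCoercive B) (ℓ : V →L[ℝ] ℝ)
    (hconv : ConvexOn ℝ {v | φ v ≠ ⊤} fun v => (φ v).toReal) (hproper : ∃ v, φ v ≠ ⊤)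
    (hbot : ∀ v, φ v ≠ ⊥) (hlsc : LowerSemicontinuous φ) {C : ℝ}
    (hlb : ∀ v : V, ((-(C * (‖v‖ + 1)) : ℝ) : EReal) ≤ φ v) :
    ∃ u, ∀ v, (((ℓ - B u) (v - u) : ℝ) : EReal) + φ u ≤ φ v := by
  obtain ⟨α, hα, hcoer⟩ := hB
  set A := InnerProductSpace.continuousLinearMapOfBilin (𝕜 := ℝ) B
  set g := (InnerProductSpace.toDual ℝ V).symm ℓ
  set M := ‖A‖ + α
  set ρ := α / M ^ 2
  have hρ : 0 < ρ := by positivity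
  set κ := 1 - α ^ 2 / (2 * M ^ 2)
  have hA : ∀ d, ‖d - ρ • A d‖ ≤ κ * ‖d‖ :=
    norm_sub_smul_le_of_coercive hα (le_add_of_nonneg_left (norm_nonneg A))
      (fun d => (A.le_opNorm d).trans (by gcongr; linarith))
      (fun d => (InnerProductSpace.continuousLinearMapOfBilin_apply B d d).symm ▸ hcoer d)
  choose prox hprox using exists_isProx hconv hproper hbot hlsc hlb hρ
  set T : V → V := fun u => prox (u - ρ • (A u - g))
  have hT : ContractingWith κ.toNNReal T := by
    refine ⟨Real.toNNReal_lt_one.2 (sub_lt_self 1 (by positivity)),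
      LipschitzWith.of_dist_le_mul fun u v => ?_⟩
    rw [dist_eq_norm, dist_eq_norm]
    refine ((hprox _).norm_sub_le (hprox _) hρ hproper hbot).trans ?_
    rw [show u - ρ • (A u - g) - (v - ρ • (A v - g)) = (u - v) - ρ • A (u - v) by
      rw [map_sub]; module]
    exact (hA (u - v)).trans (mul_le_mul_of_nonneg_right (Real.le_coe_toNNReal κ) (norm_nonneg _))
  have : Nonempty V := ⟨0⟩
  set u := ContractingWith.fixedPoint T hT
  have hu := hprox (u - ρ • (A u - g))
  rw [show prox (u - ρ • (A u - g)) = u from hT.fixedPoint_isFixedPt] at hu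
  refine ⟨u, fun v => ?_⟩
  convert hu v using 3
  rw [show u - ρ • (A u - g) - u = -ρ • (A u - g) by module, real_inner_smul_left, inner_sub_left,
    InnerProductSpace.continuousLinearMapOfBilin_apply, InnerProductSpace.toDual_symm_apply]
  field_simp
  rw [sub_apply, neg_sub]

end

theorem exists_solution_stationary_oseen_VI_general
    {V H : Type*}
    [NormedAddCommGroup V] [InnerProductSpace ℝ V] [CompleteSpace V]
    [NormedAddCommGroup H] [InnerProductSpace ℝ H]
    -- Gelfand triple: continuous, dense, compact embedding V ↪ H
    (ι : V →L[ℝ] H)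
    -- the bilinear form a, with a(v,v) = ‖v‖_V²
    (a : V →L[ℝ] V →L[ℝ] ℝ) (ha : ∀ v : V, a v v = ‖v‖ ^ 2)
    -- the Navier–Stokes type nonlinearity, as a bounded trilinear form
    (b : V →L[ℝ] V →L[ℝ] V →L[ℝ] ℝ)
    -- the monotone type nonlinearity φ
    (φ : V → EReal)
    (hφ_conv : ∀ x y : V, ∀ t : ℝ, 0 ≤ t → t ≤ 1 →
      φ (t • x + (1 - t) • y) ≤ (t : EReal) * φ x + ((1 - t : ℝ) : EReal) * φ y)
    (hφ_proper : ∃ v, φ v ≠ ⊤) (hφ_bot : ∀ v, φ v ≠ ⊥)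
    (hφ_lsc : LowerSemicontinuous φ)
    (Cφ1 : ℝ)
    (hφ_lb : ∀ v : V, (↑(-(Cφ1 * (‖v‖ + 1))) : EReal) ≤ φ v)
    -- (H1), raw form with exponent β₁ ∈ (0,1]
    (β1 : ℝ)
    -- (H1), rephrased form with θ₁ = 2/β₁ and ε = 1/4, with constant C_{θ₁,1/4}
    (Cθ1 : ℝ)
    (hH1' : ∀ u v : V, |b u v v| ≤ Cθ1 * ‖u‖ ^ (2 / β1) * ‖ι v‖ ^ 2 + (1 / 4) * ‖v‖ ^ 2)
    -- data
    (w : V) (f : H) (lam : ℝ) (hlam : Cθ1 * ‖w‖ ^ (2 / β1) ≤ lam) :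
    ∃ u : V,
      (∀ v : V,
        (↑((inner ℝ f (ι v - ι u) : ℝ) - lam * (inner ℝ (ι u) (ι v - ι u) : ℝ)
            - a u (v - u) - b w u (v - u)) : EReal) + φ u ≤ φ v) ∧
      -- in particular, u ∈ D(∂φ)
      ∃ ξ : V →L[ℝ] ℝ, ∀ v : V, (↑(ξ (v - u)) : EReal) + φ u ≤ φ v := by
  set L : V →L[ℝ] V →L[ℝ] ℝ :=
    lam • ((innerSL ℝ).bilinearComp ι ι : V →L[ℝ] V →L[ℝ] ℝ) + a + b w
  have hL : IsCoercive L := ⟨3 / 4, by norm_num, fun z => by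
    have hLz : L z z = lam * ‖ι z‖ ^ 2 + ‖z‖ ^ 2 + b w z z := by simp [L, ha]
    nlinarith [abs_le.mp (hH1' w z), mul_le_mul_of_nonneg_right hlam (sq_nonneg ‖ι z‖)]⟩
  obtain ⟨u, hu⟩ := hL.exists_variationalInequality ((innerSL ℝ f).comp ι)
    (convexOn_toReal_of_ne_bot hφ_conv hφ_bot) hφ_proper hφ_bot hφ_lsc hφ_lb
  refine ⟨u, fun v => ?_, _, hu⟩
  convert hu v using 3
  simp [L, inner_sub_right]
  ring

/-- **Existence for the stationary Oseen-type variational inequality** (Lemma 3.1).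
The Gelfand triple `V ⊂ H = H' ⊂ V'` is encoded by a continuous, injective, dense and compact
embedding `ι : V →L[ℝ] H`; the Navier–Stokes nonlinearity `B : V × V → V'` is encoded through
the bounded trilinear form `b u v w = ⟨B(u,v), w⟩`; `φ : V → (−∞,+∞]` is convex, proper and
lower semicontinuous.  The variational inequality
`λ(u,v−u) + a(u,v−u) + ⟨B(w,u),v−u⟩ + φ(v) − φ(u) ≥ (f,v−u)` is written in the equivalent
subtraction-free form `((f,v−u) − λ(u,v−u) − a(u,v−u) − ⟨B(w,u),v−u⟩ : EReal) + φ(u) ≤ φ(v)`. -/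
theorem exists_solution_stationary_oseen_VI
    {V H : Type*}
    [NormedAddCommGroup V] [InnerProductSpace ℝ V] [CompleteSpace V]
    [NormedAddCommGroup H] [InnerProductSpace ℝ H] [CompleteSpace H]
    -- Gelfand triple: continuous, dense, compact embedding V ↪ H
    (ι : V →L[ℝ] H) (hι_inj : Function.Injective ι) (hι_dense : DenseRange ι)
    (hι_cpt : IsCompactOperator (⇑ι))
    -- the bilinear form a, with a(v,v) = ‖v‖_V²
    (a : V →L[ℝ] V →L[ℝ] ℝ) (ha : ∀ v : V, a v v = ‖v‖ ^ 2)
    -- the Navier–Stokes type nonlinearity, as a bounded trilinear form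
    (b : V →L[ℝ] V →L[ℝ] V →L[ℝ] ℝ)
    (CB : ℝ) (hCB : 0 < CB) (hb : ∀ u v z : V, |b u v z| ≤ CB * ‖u‖ * ‖v‖ * ‖z‖)
    -- the monotone type nonlinearity φ
    (φ : V → EReal)
    (hφ_conv : ∀ x y : V, ∀ t : ℝ, 0 ≤ t → t ≤ 1 →
      φ (t • x + (1 - t) • y) ≤ (t : EReal) * φ x + ((1 - t : ℝ) : EReal) * φ y)
    (hφ_proper : ∃ v, φ v ≠ ⊤) (hφ_bot : ∀ v, φ v ≠ ⊥)
    (hφ_lsc : LowerSemicontinuous φ)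
    (Cφ1 : ℝ) (hCφ1 : 0 < Cφ1)
    (hφ_lb : ∀ v : V, (↑(-(Cφ1 * (‖v‖ + 1))) : EReal) ≤ φ v)
    -- (H1), raw form with exponent β₁ ∈ (0,1]
    (C1 β1 : ℝ) (hC1 : 0 < C1) (hβ1 : 0 < β1 ∧ β1 ≤ 1)
    (hH1 : ∀ u v : V, |b u v v| ≤ C1 * ‖u‖ * ‖v‖ * ‖ι v‖ ^ β1 * ‖v‖ ^ (1 - β1))
    -- (H1), rephrased form with θ₁ = 2/β₁ and ε = 1/4, with constant C_{θ₁,1/4}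
    (Cθ1 : ℝ) (hCθ1 : 0 < Cθ1)
    (hH1' : ∀ u v : V, |b u v v| ≤ Cθ1 * ‖u‖ ^ (2 / β1) * ‖ι v‖ ^ 2 + (1 / 4) * ‖v‖ ^ 2)
    -- (H2): weak sequential continuity
    (hH2 : ∀ u : V, ∀ (vj wj : ℕ → V) (v w : V),
      (∀ z : V, Tendsto (fun j => (inner ℝ z (vj j) : ℝ)) atTop (𝓝 (inner ℝ z v))) →
      (∀ z : V, Tendsto (fun j => (inner ℝ z (wj j) : ℝ)) atTop (𝓝 (inner ℝ z w))) →
      Tendsto (fun j => b u (vj j) (wj j)) atTop (𝓝 (b u v w)))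
    -- data
    (w : V) (f : H) (lam : ℝ) (hlam : Cθ1 * ‖w‖ ^ (2 / β1) ≤ lam) :
    ∃ u : V,
      (∀ v : V,
        (↑((inner ℝ f (ι v - ι u) : ℝ) - lam * (inner ℝ (ι u) (ι v - ι u) : ℝ)
            - a u (v - u) - b w u (v - u)) : EReal) + φ u ≤ φ v) ∧
      -- in particular, u ∈ D(∂φ)
      ∃ ξ : V →L[ℝ] ℝ, ∀ v : V, (↑(ξ (v - u)) : EReal) + φ u ≤ φ v :=
  exists_solution_stationary_oseen_VI_general ι a ha b φ hφ_conv hφ_proper hφ_bot hφ_lsc Cφ1 hφ_lb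
    β1 Cθ1 hH1' w f lam hlam
end

section
/- Uniqueness for the stationary Oseen-type variational inequality (Remark after Lemma 3.2): Assume the Gelfand-triple setting and hypothesis (H1). Let w ∈ V, f ∈ H, and λ ≥ C_{θ₁,1/4}·‖w‖_V^{θ₁}, where C_{θ₁,1/4} is the constant from the rephrased form of (H1) with ε = 1/4. If u ∈ V and U ∈ V both satisfy λ·(z, v−z) + a(z, v−z) + ⟨B(w,z), v−z⟩ + φ(v) − φ(z) ≥ (f, v−z) for all v ∈ V (with z = u and z = U respectively), then u = U. -/
/-!
Testing the inequality for `u` with `v = U` and the one for `U` with `v = u` and adding them,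
the data `f` and the (finite) values of `φ` cancel, leaving
`λ‖e‖_H² + a(e,e) + ⟨B(w,e),e⟩ ≤ 0` for `e = u - U`. By (H1) with `ε = 1/4` and the lower
bound on `λ`, the left side is at least `(3/4)‖e‖_V²`, so `e = 0`.
-/

namespace EReal

theorem ne_top_of_forall_coe_add_le {α : Type*} {φ : α → EReal} {g : α → ℝ} {z : α}
    (hφ : ∃ v, φ v ≠ ⊤) (hz : ∀ v, (g v : EReal) + φ z ≤ φ v) : φ z ≠ ⊤ := by
  obtain ⟨v, hv⟩ := hφ
  intro htop
  have h := hz v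
  rw [htop, add_top_of_ne_bot (coe_ne_bot _)] at h
  exact hv (top_le_iff.mp h)

theorem add_nonpos_of_coe_add_le_of_coe_add_le {r s : ℝ} {x y : EReal}
    (hx_top : x ≠ ⊤) (hx_bot : x ≠ ⊥) (hxy : (r : EReal) + x ≤ y) (hyx : (s : EReal) + y ≤ x) :
    r + s ≤ 0 := by
  lift x to ℝ using ⟨hx_top, hx_bot⟩
  have hy_bot : y ≠ ⊥ := ne_bot_of_le_ne_bot (coe_ne_bot (r + x)) (by exact_mod_cast hxy)
  have hy_top : y ≠ ⊤ := fun h ↦ by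
    rw [h, add_top_of_ne_bot (coe_ne_bot s)] at hyx
    exact coe_ne_top x (top_le_iff.mp hyx)
  lift y to ℝ using ⟨hy_top, hy_bot⟩
  norm_cast at hxy hyx
  linarith

end EReal

section OseenResidual

variable {V H : Type*} [NormedAddCommGroup V] [InnerProductSpace ℝ V]
  [NormedAddCommGroup H] [InnerProductSpace ℝ H]

/-- The variational inequality at `z` reads `oseenResidual ι a b w f lam z v + φ z ≤ φ v`
for all `v`. -/
noncomputable def oseenResidual (ι : V →L[ℝ] H) (a : V →L[ℝ] V →L[ℝ] ℝ)
    (b : V →L[ℝ] V →L[ℝ] V →L[ℝ] ℝ) (w : V) (f : H) (lam : ℝ) (z v : V) : ℝ :=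
  inner ℝ f (ι v - ι z) - lam * inner ℝ (ι z) (ι v - ι z) - a z (v - z) - b w z (v - z)

theorem oseenResidual_add_oseenResidual_swap (ι : V →L[ℝ] H) (a : V →L[ℝ] V →L[ℝ] ℝ)
    (b : V →L[ℝ] V →L[ℝ] V →L[ℝ] ℝ) (w : V) (f : H) (lam : ℝ) (u U : V) :
    oseenResidual ι a b w f lam u U + oseenResidual ι a b w f lam U u =
      lam * ‖ι (u - U)‖ ^ 2 + a (u - U) (u - U) + b w (u - U) (u - U) := by
  simp only [oseenResidual, ← real_inner_self_eq_norm_sq, map_sub, sub_apply,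
    inner_sub_left, inner_sub_right, real_inner_comm (ι u) (ι U)]
  ring

theorem one_sub_mul_norm_sq_le_of_abs_le (ι : V →L[ℝ] H) {a c : V →L[ℝ] V →L[ℝ] ℝ}
    (ha : ∀ v : V, a v v = ‖v‖ ^ 2) {K ε lam : ℝ}
    (hc : ∀ v : V, |c v v| ≤ K * ‖ι v‖ ^ 2 + ε * ‖v‖ ^ 2) (hlam : K ≤ lam) (v : V) :
    (1 - ε) * ‖v‖ ^ 2 ≤ lam * ‖ι v‖ ^ 2 + a v v + c v v := by
  have hK : K * ‖ι v‖ ^ 2 ≤ lam * ‖ι v‖ ^ 2 := by gcongr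
  linarith [ha v, neg_abs_le (c v v), hc v]

end OseenResidual

theorem uniqueness_stationary_oseen_VI_general
    {V H : Type*}
    [NormedAddCommGroup V] [InnerProductSpace ℝ V]
    [NormedAddCommGroup H] [InnerProductSpace ℝ H]
    (ι : V →L[ℝ] H)
    (a : V →L[ℝ] V →L[ℝ] ℝ) (ha : ∀ v : V, a v v = ‖v‖ ^ 2)
    (b : V →L[ℝ] V →L[ℝ] V →L[ℝ] ℝ)
    (φ : V → EReal)
    (hφ_proper : ∃ v, φ v ≠ ⊤) (hφ_bot : ∀ v, φ v ≠ ⊥)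
    (β1 : ℝ)
    -- (H1), rephrased form with θ₁ = 2/β₁ and ε = 1/4, with constant C_{θ₁,1/4}
    (Cθ1 : ℝ)
    (hH1' : ∀ u v : V, |b u v v| ≤ Cθ1 * ‖u‖ ^ (2 / β1) * ‖ι v‖ ^ 2 + (1 / 4) * ‖v‖ ^ 2)
    -- data
    (w : V) (f : H) (lam : ℝ) (hlam : Cθ1 * ‖w‖ ^ (2 / β1) ≤ lam)
    (u U : V)
    (hu : ∀ v : V,
      (↑((inner ℝ f (ι v - ι u) : ℝ) - lam * (inner ℝ (ι u) (ι v - ι u) : ℝ)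
          - a u (v - u) - b w u (v - u)) : EReal) + φ u ≤ φ v)
    (hU : ∀ v : V,
      (↑((inner ℝ f (ι v - ι U) : ℝ) - lam * (inner ℝ (ι U) (ι v - ι U) : ℝ)
          - a U (v - U) - b w U (v - U)) : EReal) + φ U ≤ φ v) :
    u = U := by
  have hsum : oseenResidual ι a b w f lam u U + oseenResidual ι a b w f lam U u ≤ 0 :=
    EReal.add_nonpos_of_coe_add_le_of_coe_add_le
      (EReal.ne_top_of_forall_coe_add_le hφ_proper hu) (hφ_bot u) (hu U) (hU u)
  rw [oseenResidual_add_oseenResidual_swap] at hsum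
  have hcoercive := one_sub_mul_norm_sq_le_of_abs_le ι ha (hH1' w) hlam (u - U)
  have hnorm : ‖u - U‖ ^ 2 = 0 := le_antisymm (by linarith) (sq_nonneg _)
  rwa [sq_eq_zero_iff, norm_eq_zero, sub_eq_zero] at hnorm

/-- **Uniqueness for the stationary Oseen-type variational inequality** (Remark after
Lemma 3.2).  Under (H1), for `λ ≥ C_{θ₁,1/4}‖w‖_V^{θ₁}` any two solutions of
`λ(z,v−z) + a(z,v−z) + ⟨B(w,z),v−z⟩ + φ(v) − φ(z) ≥ (f,v−z)` for all `v ∈ V` coincide. -/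
theorem uniqueness_stationary_oseen_VI
    {V H : Type*}
    [NormedAddCommGroup V] [InnerProductSpace ℝ V] [CompleteSpace V]
    [NormedAddCommGroup H] [InnerProductSpace ℝ H] [CompleteSpace H]
    (ι : V →L[ℝ] H) (hι_inj : Function.Injective ι) (hι_dense : DenseRange ι)
    (hι_cpt : IsCompactOperator (⇑ι))
    (a : V →L[ℝ] V →L[ℝ] ℝ) (ha : ∀ v : V, a v v = ‖v‖ ^ 2)
    (b : V →L[ℝ] V →L[ℝ] V →L[ℝ] ℝ)
    (CB : ℝ) (hCB : 0 < CB) (hb : ∀ u v z : V, |b u v z| ≤ CB * ‖u‖ * ‖v‖ * ‖z‖)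
    (φ : V → EReal)
    (hφ_conv : ∀ x y : V, ∀ t : ℝ, 0 ≤ t → t ≤ 1 →
      φ (t • x + (1 - t) • y) ≤ (t : EReal) * φ x + ((1 - t : ℝ) : EReal) * φ y)
    (hφ_proper : ∃ v, φ v ≠ ⊤) (hφ_bot : ∀ v, φ v ≠ ⊥)
    (hφ_lsc : LowerSemicontinuous φ)
    -- (H1), raw form with exponent β₁ ∈ (0,1]
    (C1 β1 : ℝ) (hC1 : 0 < C1) (hβ1 : 0 < β1 ∧ β1 ≤ 1)
    (hH1 : ∀ u v : V, |b u v v| ≤ C1 * ‖u‖ * ‖v‖ * ‖ι v‖ ^ β1 * ‖v‖ ^ (1 - β1))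
    -- (H1), rephrased form with θ₁ = 2/β₁ and ε = 1/4, with constant C_{θ₁,1/4}
    (Cθ1 : ℝ) (hCθ1 : 0 < Cθ1)
    (hH1' : ∀ u v : V, |b u v v| ≤ Cθ1 * ‖u‖ ^ (2 / β1) * ‖ι v‖ ^ 2 + (1 / 4) * ‖v‖ ^ 2)
    -- data
    (w : V) (f : H) (lam : ℝ) (hlam : Cθ1 * ‖w‖ ^ (2 / β1) ≤ lam)
    (u U : V)
    (hu : ∀ v : V,
      (↑((inner ℝ f (ι v - ι u) : ℝ) - lam * (inner ℝ (ι u) (ι v - ι u) : ℝ)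
          - a u (v - u) - b w u (v - u)) : EReal) + φ u ≤ φ v)
    (hU : ∀ v : V,
      (↑((inner ℝ f (ι v - ι U) : ℝ) - lam * (inner ℝ (ι U) (ι v - ι U) : ℝ)
          - a U (v - U) - b w U (v - U)) : EReal) + φ U ≤ φ v) :
    u = U :=
  uniqueness_stationary_oseen_VI_general ι a ha b φ hφ_proper hφ_bot β1 Cθ1 hH1' w f lam hlam u U hu
    hU
end

section
/- Time-integrated variational inequality for the interpolants (Lemma 5.2): Assume the Gelfand-triple setting, the Hilbert space W, and let u⁰ ∈ D(φ), f ∈ L²(0,T;H), Δt > 0, T* := N·Δt ≤ T, and u¹,…,u^N ∈ W solve the semi-implicit scheme. Define on [0,T*] the piecewise-constant interpolants u_Δt(t) := uⁿ for (n−1)Δt < t ≤ nΔt, ū_Δt(t) := uⁿ⁻¹ for (n−1)Δt ≤ t < nΔt, f_Δt(t) := fⁿ for (n−1)Δt < t ≤ nΔt, and the piecewise-linear interpolant û_Δt(t) := ((nΔt − t)/Δt)·uⁿ⁻¹ + ((t − (n−1)Δt)/Δt)·uⁿ for (n−1)Δt ≤ t ≤ nΔt. Then for every ṽ ∈ L²(0,T*;V):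 ∫_0^{T*} [ (∂_t û_Δt(t) + B(ū_Δt(t), u_Δt(t)) − f_Δt(t), ṽ(t) − u_Δt(t)) + a(u_Δt(t), ṽ(t) − u_Δt(t)) + φ(ṽ(t)) − φ(u_Δt(t)) ] dt ≥ 0, where the integral of t ↦ φ(ṽ(t)) is well-defined in (−∞,+∞] because φ(v) ≥ −C_{φ1}(‖v‖_V + 1). -/
open MeasureTheory Set

/-!
Off the countable grid `Δt ℕ`, the time `t` lies in the open cell `((n−1)Δt, nΔt)` with
`n = ⌈t/Δt⌉₊`, where `⌊t/Δt⌋₊ = n − 1`; there the integrand is exactly the scheme at step `n`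
tested with `v = ṽ(t)`, rearranged, so it is nonnegative almost everywhere.
-/

theorem Nat.floor_eq_ceil_sub_one {R : Type*} [Semiring R] [LinearOrder R] [IsStrictOrderedRing R]
    [FloorSemiring R] {a : R} (ha : 0 ≤ a) (hnat : ∀ k : ℕ, a ≠ k) : ⌊a⌋₊ = ⌈a⌉₊ - 1 := by
  have hlt : ⌊a⌋₊ < ⌈a⌉₊ := Nat.lt_ceil.mpr ((Nat.floor_le ha).lt_of_ne (hnat _).symm)
  have hle : ⌈a⌉₊ ≤ ⌊a⌋₊ + 1 := Nat.ceil_le_floor_add_one a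
  omega

theorem ceil_div_mem_Icc_of_mem_Ioc {t Δt : ℝ} {N : ℕ} (hΔt : 0 < Δt)
    (ht : t ∈ Ioc 0 (N * Δt)) : ⌈t / Δt⌉₊ ∈ Icc 1 N :=
  ⟨Nat.one_le_iff_ne_zero.mpr (Nat.ceil_pos.mpr (div_pos ht.1 hΔt)).ne',
    Nat.ceil_le.mpr ((div_le_iff₀ hΔt).mpr ht.2)⟩

theorem MeasureTheory.Measure.ae_forall_div_ne_natCast (μ : Measure ℝ) [NullSingletonClass μ]
    {Δt : ℝ} (hΔt : Δt ≠ 0) : ∀ᵐ t ∂μ, ∀ k : ℕ, t / Δt ≠ k := by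
  refine ae_all_iff.mpr fun k => (μ.ae_ne (k * Δt)).mono fun t ht => ?_
  rwa [ne_eq, div_eq_iff hΔt]

theorem EReal.le_sub_toReal_of_coe_add_le {r c : ℝ} {x : EReal} (hx_top : x ≠ ⊤)
    (hx_bot : x ≠ ⊥) (h : (r : EReal) + x ≤ c) : r ≤ c - x.toReal := by
  rw [← EReal.coe_toReal hx_top hx_bot, ← EReal.coe_add, EReal.coe_le_coe_iff] at h
  linarith

/-- The interpolants are encoded through the step index `n = ⌈t/Δt⌉₊` (resp. `⌊t/Δt⌋₊` for
`ū_Δt`), and the extended-real integrand `φ(ṽ(t))` through a real function `g` equal to it a.e. -/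
theorem time_integrated_VI_interpolants_general
    {V H : Type*}
    [NormedAddCommGroup V] [InnerProductSpace ℝ V]
    [NormedAddCommGroup H] [InnerProductSpace ℝ H]
    -- Gelfand triple: continuous, dense, compact embedding V ↪ H
    (ι : V →L[ℝ] H)
    -- the bilinear form a, with a(v,v) = ‖v‖_V²
    (a : V →L[ℝ] V →L[ℝ] ℝ)
    -- the Navier–Stokes type nonlinearity, as a bounded trilinear form b u v w = ⟨B(u,v),w⟩
    (b : V →L[ℝ] V →L[ℝ] V →L[ℝ] ℝ)
    -- the monotone type nonlinearity φ : convex, proper, lower semicontinuous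
    (φ : V → EReal)
    (hφ_bot : ∀ v, φ v ≠ ⊥)
    -- data and discrete solution, with T* = N Δt ≤ T
    (Δt : ℝ) (N : ℕ) (f : ℝ → H) (u : ℕ → V)
    (hΔt : 0 < Δt)
    (hufin : ∀ n, n ≤ N → φ (u n) ≠ ⊤)
    -- the semi-implicit scheme, with fⁿ = (1/Δt)∫_{(n−1)Δt}^{nΔt} f dt
    (hscheme : ∀ n, 1 ≤ n → n ≤ N → ∀ v : V,
      (↑((inner ℝ (Δt⁻¹ • ∫ t in Ioc (((n : ℝ) - 1) * Δt) ((n : ℝ) * Δt), f t)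
            (ι v - ι (u n)) : ℝ)
        - Δt⁻¹ * (inner ℝ (ι (u n) - ι (u (n - 1))) (ι v - ι (u n)) : ℝ)
        - a (u n) (v - u n) - b (u (n - 1)) (u n) (v - u n)) : EReal)
        + φ (u n) ≤ φ v)
    -- a test function ṽ ∈ L²(0,T*;V), with φ(ṽ(·)) realized by an integrable g
    (vt : ℝ → V)
    (g : ℝ → ℝ)
    (hgφ : ∀ᵐ t ∂(volume.restrict (Ioc (0:ℝ) ((N : ℝ) * Δt))), φ (vt t) = ((g t : ℝ) : EReal)) :
    0 ≤ ∫ t in Ioc (0:ℝ) ((N : ℝ) * Δt),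
        ((inner ℝ (Δt⁻¹ • (ι (u ⌈t / Δt⌉₊) - ι (u (⌈t / Δt⌉₊ - 1)))
              - Δt⁻¹ • ∫ s in Ioc (((⌈t / Δt⌉₊ : ℕ) : ℝ) * Δt - Δt) (((⌈t / Δt⌉₊ : ℕ) : ℝ) * Δt), f s)
            (ι (vt t) - ι (u ⌈t / Δt⌉₊)) : ℝ)
          + b (u ⌊t / Δt⌋₊) (u ⌈t / Δt⌉₊) (vt t - u ⌈t / Δt⌉₊)
          + a (u ⌈t / Δt⌉₊) (vt t - u ⌈t / Δt⌉₊)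
          + g t - (φ (u ⌈t / Δt⌉₊)).toReal) := by
  refine integral_nonneg_of_ae ?_
  filter_upwards [ae_restrict_mem measurableSet_Ioc, hgφ,
    Measure.ae_forall_div_ne_natCast _ hΔt.ne'] with t ht hgt hgrid
  obtain ⟨hn1, hnN⟩ := ceil_div_mem_Icc_of_mem_Ioc hΔt ht
  have hstep := hscheme _ hn1 hnN (vt t)
  rw [hgt] at hstep
  have hineq := EReal.le_sub_toReal_of_coe_add_le (hufin _ hnN) (hφ_bot _) hstep
  rw [sub_one_mul] at hineq
  rw [Pi.zero_apply, Nat.floor_eq_ceil_sub_one (div_pos ht.1 hΔt).le hgrid, inner_sub_left,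
    real_inner_smul_left]
  linarith

/-- **Time-integrated variational inequality for the interpolants** (Lemma 5.2).
For the piecewise-constant interpolants `u_Δt(t) = uⁿ`, `ū_Δt(t) = uⁿ⁻¹`, `f_Δt(t) = fⁿ`
(on `((n−1)Δt, nΔt]`, resp. `[(n−1)Δt, nΔt)`) and the piecewise-linear interpolant `û_Δt`
(whose a.e. derivative is `(uⁿ − uⁿ⁻¹)/Δt`), encoded via `n = ⌈t/Δt⌉₊` resp. `⌊t/Δt⌋₊`,
every `ṽ ∈ L²(0,T*;V)` satisfies
`∫₀^{T*} [(∂ₜû_Δt + B(ū_Δt,u_Δt) − f_Δt, ṽ − u_Δt) + a(u_Δt, ṽ − u_Δt) + φ(ṽ) − φ(u_Δt)] dt ≥ 0`.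
The extended-real integrand `φ(ṽ(t))` is encoded via an arbitrary integrable real
function `g` with `φ(ṽ(t)) = g(t)` a.e. (otherwise the integral equals `+∞`). -/
theorem time_integrated_VI_interpolants
    {V H W : Type*}
    [NormedAddCommGroup V] [InnerProductSpace ℝ V] [CompleteSpace V]
    [NormedAddCommGroup H] [InnerProductSpace ℝ H] [CompleteSpace H]
    [NormedAddCommGroup W] [InnerProductSpace ℝ W] [CompleteSpace W]
    -- Gelfand triple: continuous, dense, compact embedding V ↪ H
    (ι : V →L[ℝ] H) (hι_inj : Function.Injective ι) (hι_dense : DenseRange ι)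
    (hι_cpt : IsCompactOperator (⇑ι))
    -- the space W, densely and compactly embedded in V
    (ιWV : W →L[ℝ] V) (hιWV_inj : Function.Injective ιWV) (hιWV_dense : DenseRange ιWV)
    (hιWV_cpt : IsCompactOperator (⇑ιWV))
    -- the bilinear form a, with a(v,v) = ‖v‖_V²
    (a : V →L[ℝ] V →L[ℝ] ℝ) (ha : ∀ v : V, a v v = ‖v‖ ^ 2)
    -- the Navier–Stokes type nonlinearity, as a bounded trilinear form b u v w = ⟨B(u,v),w⟩
    (b : V →L[ℝ] V →L[ℝ] V →L[ℝ] ℝ)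
    (CB : ℝ) (hCB : 0 < CB) (hb : ∀ u v z : V, |b u v z| ≤ CB * ‖u‖ * ‖v‖ * ‖z‖)
    -- the monotone type nonlinearity φ : convex, proper, lower semicontinuous
    (φ : V → EReal)
    (hφ_conv : ∀ x y : V, ∀ t : ℝ, 0 ≤ t → t ≤ 1 →
      φ (t • x + (1 - t) • y) ≤ (t : EReal) * φ x + ((1 - t : ℝ) : EReal) * φ y)
    (hφ_proper : ∃ v, φ v ≠ ⊤) (hφ_bot : ∀ v, φ v ≠ ⊥)
    (hφ_lsc : LowerSemicontinuous φ)
    (Cφ1 : ℝ) (hCφ1 : 0 < Cφ1)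
    (hφ_lb : ∀ v : V, (↑(-(Cφ1 * (‖v‖ + 1))) : EReal) ≤ φ v)
    -- data and discrete solution, with T* = N Δt ≤ T
    (T Δt : ℝ) (N : ℕ) (f : ℝ → H) (u : ℕ → V)
    (hT : 0 < T) (hΔt : 0 < Δt) (hNT : (N : ℝ) * Δt ≤ T)
    (hf : MemLp f 2 (volume.restrict (Ioc (0:ℝ) T)))
    (hu0 : φ (u 0) ≠ ⊤)
    (huW : ∀ n, 1 ≤ n → n ≤ N → ∃ uw : W, ιWV uw = u n)
    (hufin : ∀ n, n ≤ N → φ (u n) ≠ ⊤)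
    -- the semi-implicit scheme, with fⁿ = (1/Δt)∫_{(n−1)Δt}^{nΔt} f dt
    (hscheme : ∀ n, 1 ≤ n → n ≤ N → ∀ v : V,
      (↑((inner ℝ (Δt⁻¹ • ∫ t in Ioc (((n : ℝ) - 1) * Δt) ((n : ℝ) * Δt), f t)
            (ι v - ι (u n)) : ℝ)
        - Δt⁻¹ * (inner ℝ (ι (u n) - ι (u (n - 1))) (ι v - ι (u n)) : ℝ)
        - a (u n) (v - u n) - b (u (n - 1)) (u n) (v - u n)) : EReal)
        + φ (u n) ≤ φ v)
    -- a test function ṽ ∈ L²(0,T*;V), with φ(ṽ(·)) realized by an integrable g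
    (vt : ℝ → V) (hvt : MemLp vt 2 (volume.restrict (Ioc (0:ℝ) ((N : ℝ) * Δt))))
    (g : ℝ → ℝ) (hg : IntegrableOn g (Ioc (0:ℝ) ((N : ℝ) * Δt)))
    (hgφ : ∀ᵐ t ∂(volume.restrict (Ioc (0:ℝ) ((N : ℝ) * Δt))), φ (vt t) = ((g t : ℝ) : EReal)) :
    0 ≤ ∫ t in Ioc (0:ℝ) ((N : ℝ) * Δt),
        ((inner ℝ (Δt⁻¹ • (ι (u ⌈t / Δt⌉₊) - ι (u (⌈t / Δt⌉₊ - 1)))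
              - Δt⁻¹ • ∫ s in Ioc (((⌈t / Δt⌉₊ : ℕ) : ℝ) * Δt - Δt) (((⌈t / Δt⌉₊ : ℕ) : ℝ) * Δt), f s)
            (ι (vt t) - ι (u ⌈t / Δt⌉₊)) : ℝ)
          + b (u ⌊t / Δt⌋₊) (u ⌈t / Δt⌉₊) (vt t - u ⌈t / Δt⌉₊)
          + a (u ⌈t / Δt⌉₊) (vt t - u ⌈t / Δt⌉₊)
          + g t - (φ (u ⌈t / Δt⌉₊)).toReal) :=
  time_integrated_VI_interpolants_general ι a b φ hφ_bot Δt N f u hΔt hufin hscheme vt g hgφ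
end

section
/- Uniqueness of strong solutions (end of Section 5): Assume the Gelfand-triple setting, the Hilbert space W, and hypotheses (H3) and (H4). Let T* > 0, f ∈ L²(0,T*;H), and let u and U both belong to H¹(0,T*;H) ∩ L∞(0,T*;V) ∩ L²(0,T*;W) and both satisfy, for a.e. t ∈ (0,T*) and all v ∈ V, the variational inequality (∂_t z(t), v − z(t)) + a(z(t), v − z(t)) + ⟨B(z(t), z(t)), v − z(t)⟩ + φ(v) − φ(z(t)) ≥ (f(t), v − z(t)) (with z = u and z = U respectively), together with u(0) = U(0). Then u(t) = U(t) in H for all t ∈ [0,T*]. -/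
/-!
Testing the variational inequality of `u` with `U` and that of `U` with `u` and adding, the
terms in `f` and `φ` cancel and, for `w = u - U`,
`(∂ₜw, w) + ‖w‖_V² ≤ -⟨B(w, u), w⟩ - ⟨B(U, w), w⟩`.
By (H4) and (H3) the right-hand side is at most `k ‖w‖_V ‖w‖_H` with
`k = C₄ (‖W ↪ V‖ + 1) ‖u‖_W + C₃ ‖U‖_W ∈ L²(0, T*)`, and Young's inequality absorbs `‖w‖_V`:
`2 (∂ₜw, w) ≤ k² ‖w‖_H²`. The energy identity `‖w(t)‖_H² = 2 ∫₀ᵗ (∂ₜw, w)` (Fubini on the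
triangle `r < s`) turns this into `‖w(t)‖_H² ≤ ∫₀ᵗ k² ‖w‖_H²`, and Gronwall's lemma with zero
initial value gives `w = 0`.
-/

open MeasureTheory Set Filter Topology
open scoped RealInnerProductSpace

theorem MeasureTheory.IntegrableOn.inner_continuousOn_of_subset {X H : Type*}
    [MeasurableSpace X] [TopologicalSpace X] [OpensMeasurableSpace X] [NormedAddCommGroup H]
    [InnerProductSpace ℝ H] [SecondCountableTopologyEither X H] {μ : Measure X} {A K : Set X}
    {g F : X → H} (hg : IntegrableOn g A μ)
    (hF : ContinuousOn F K) (hA : MeasurableSet A) (hK : IsCompact K) (hAK : A ⊆ K) :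
    IntegrableOn (fun x => ⟪g x, F x⟫) A μ := by
  obtain ⟨C, hC⟩ := hK.exists_bound_of_continuousOn hF
  refine Integrable.mono' (hg.norm.mul_const C)
    (hg.1.inner ((hF.mono hAK).aestronglyMeasurable hA)) ?_
  refine ae_restrict_of_forall_mem hA fun x hx => ?_
  calc ‖⟪g x, F x⟫‖ ≤ ‖g x‖ * ‖F x‖ := norm_inner_le_norm _ _
    _ ≤ ‖g x‖ * C := by gcongr; exact hC x (hAK hx)

theorem integral_Ioc_integral_Ioc_swap {E : Type*} [NormedAddCommGroup E] [NormedSpace ℝ E]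
    {f : ℝ → ℝ → E} {a b : ℝ}
    (hf : Integrable (Function.uncurry f)
      ((volume.restrict (Ioc a b)).prod (volume.restrict (Ioc a b)))) :
    ∫ r in Ioc a b, ∫ s in Ioc r b, f r s = ∫ s in Ioc a b, ∫ r in Ioo a s, f r s := by
  set T : ℝ → ℝ → E := fun r s => (Ioi r).indicator (f r) s
  have hT : Function.uncurry T = {p : ℝ × ℝ | p.1 < p.2}.indicator (Function.uncurry f) := by
    ext p; rfl
  have hrow : ∀ r ∈ Ioc a b, ∫ s in Ioc r b, f r s = ∫ s in Ioc a b, T r s := by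
    intro r hr
    rw [setIntegral_indicator measurableSet_Ioi, Ioc_inter_Ioi, max_eq_right hr.1.le]
  have hcol : ∀ s ∈ Ioc a b, ∫ r in Ioo a s, f r s = ∫ r in Ioc a b, T r s := by
    intro s hs
    have hTs : ∀ r, T r s = (Iio s).indicator (fun r => f r s) r := fun _ => rfl
    simp_rw [hTs]
    have hIoo : Ioc a b ∩ Iio s = Ioo a s := by
      ext r
      simp only [mem_inter_iff, mem_Ioc, mem_Iio, mem_Ioo]
      exact ⟨fun h => ⟨h.1.1, h.2⟩, fun h => ⟨⟨h.1, h.2.le.trans hs.2⟩, h.2⟩⟩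
    rw [setIntegral_indicator measurableSet_Iio, hIoo]
  rw [setIntegral_congr_fun measurableSet_Ioc hrow, setIntegral_congr_fun measurableSet_Ioc hcol]
  exact integral_integral_swap (hT ▸ hf.indicator (measurableSet_lt measurable_fst measurable_snd))

theorem sq_norm_integral_Ioc_eq {H : Type*} [NormedAddCommGroup H] [InnerProductSpace ℝ H]
    [CompleteSpace H] {g : ℝ → H} {a t : ℝ} (hg : IntegrableOn g (Ioc a t)) :
    ‖∫ s in Ioc a t, g s‖ ^ 2 = 2 * ∫ s in Ioc a t, ⟪g s, ∫ r in Ioc a s, g r⟫ := by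
  set c := ∫ s in Ioc a t, g s
  set F : ℝ → H := fun s => ∫ r in Ioc a s, g r
  have hF : ContinuousOn F (Icc a t) := by
    refine intervalIntegral.continuousOn_primitive ?_
    rwa [integrableOn_Icc_iff_integrableOn_Ioc]
  have hgF : IntegrableOn (fun s => ⟪g s, F s⟫) (Ioc a t) :=
    hg.inner_continuousOn_of_subset hF measurableSet_Ioc isCompact_Icc Ioc_subset_Icc_self
  have hgg : Integrable (Function.uncurry fun r s => ⟪g r, g s⟫)
      ((volume.restrict (Ioc a t)).prod (volume.restrict (Ioc a t))) :=
    (hg.norm.mul_prod hg.norm).mono' (hg.1.comp_fst.inner hg.1.comp_snd)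
      (Eventually.of_forall fun _ => norm_inner_le_norm _ _)
  have htail : ∀ r ∈ Ioc a t, ∫ s in Ioc r t, g s = c - F r := by
    intro r hr
    rw [eq_sub_iff_add_eq', ← setIntegral_union (Ioc_disjoint_Ioc_of_le le_rfl) measurableSet_Ioc
      (hg.mono_set (Ioc_subset_Ioc_right hr.2)) (hg.mono_set (Ioc_subset_Ioc_left hr.1.le)),
      Ioc_union_Ioc_eq_Ioc hr.1.le hr.2]
  have hswap : ∫ r in Ioc a t, ⟪g r, c - F r⟫ = ∫ s in Ioc a t, ⟪g s, F s⟫ := calc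
    _ = ∫ r in Ioc a t, ∫ s in Ioc r t, ⟪g r, g s⟫ := by
      refine setIntegral_congr_fun measurableSet_Ioc fun r hr => ?_
      rw [← htail r hr, integral_inner (hg.mono_set (Ioc_subset_Ioc_left hr.1.le))]
    _ = ∫ s in Ioc a t, ∫ r in Ioo a s, ⟪g r, g s⟫ := integral_Ioc_integral_Ioc_swap hgg
    _ = ∫ s in Ioc a t, ⟪g s, F s⟫ := by
      refine setIntegral_congr_fun measurableSet_Ioc fun s hs => ?_
      simp_rw [real_inner_comm (g s)]
      rw [← integral_Ioc_eq_integral_Ioo,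
        integral_inner (hg.mono_set (Ioc_subset_Ioc_right hs.2))]
  have hsplit : ∫ r in Ioc a t, ⟪g r, c - F r⟫ = ‖c‖ ^ 2 - ∫ s in Ioc a t, ⟪g s, F s⟫ := by
    simp_rw [inner_sub_right, real_inner_comm c]
    rw [integral_sub (hg.const_inner c) hgF, integral_inner hg, real_inner_self_eq_norm_sq]
  linarith

section Gronwall

variable {h K : ℝ → ℝ} {a b : ℝ}

theorem eqOn_zero_of_le_integral_mul_of_integral_lt_one (hh : ContinuousOn h (Icc a b))
    (hh0 : ∀ t ∈ Icc a b, 0 ≤ h t) (hK : IntegrableOn K (Ioc a b))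
    (hK0 : ∀ᵐ s ∂volume.restrict (Ioc a b), 0 ≤ K s) (hK1 : ∫ s in Ioc a b, K s < 1)
    (hle : ∀ t ∈ Icc a b, h t ≤ ∫ s in Ioc a t, K s * h s) : EqOn h 0 (Icc a b) := by
  rcases (Icc a b).eq_empty_or_nonempty with hempty | hne
  · simp [hempty]
  obtain ⟨t₀, ht₀, hmax⟩ := isCompact_Icc.exists_isMaxOn hne hh
  have hKh : IntegrableOn (fun s => K s * h s) (Ioc a b) :=
    hK.mul_continuousOn_of_subset hh measurableSet_Ioc isCompact_Icc Ioc_subset_Icc_self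
  have hmax_le : h t₀ ≤ (∫ s in Ioc a b, K s) * h t₀ := calc
    h t₀ ≤ ∫ s in Ioc a t₀, K s * h s := hle t₀ ht₀
    _ ≤ ∫ s in Ioc a b, K s * h s := by
      refine setIntegral_mono_set hKh ?_ (Ioc_subset_Ioc_right ht₀.2).eventuallyLE
      filter_upwards [hK0, ae_restrict_mem measurableSet_Ioc] with s hKs hs
      exact mul_nonneg hKs (hh0 s (Ioc_subset_Icc_self hs))
    _ ≤ ∫ s in Ioc a b, K s * h t₀ := by
      refine integral_mono_ae hKh (hK.mul_const _) ?_
      filter_upwards [hK0, ae_restrict_mem measurableSet_Ioc] with s hKs hs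
      exact mul_le_mul_of_nonneg_left (hmax (Ioc_subset_Icc_self hs)) hKs
    _ = (∫ s in Ioc a b, K s) * h t₀ := integral_mul_const _ _
  have hmax_zero : h t₀ ≤ 0 := by nlinarith [hh0 t₀ ht₀]
  exact fun t ht => le_antisymm ((hmax ht).trans hmax_zero) (hh0 t ht)

theorem eqOn_zero_of_le_integral_mul (hh : ContinuousOn h (Icc a b))
    (hh0 : ∀ t ∈ Icc a b, 0 ≤ h t) (hK : IntegrableOn K (Ioc a b))
    (hK0 : ∀ᵐ s ∂volume.restrict (Ioc a b), 0 ≤ K s)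
    (hle : ∀ t ∈ Icc a b, h t ≤ ∫ s in Ioc a t, K s * h s) : EqOn h 0 (Icc a b) := by
  rcases lt_or_ge b a with hba | hab
  · simp [Icc_eq_empty_of_lt hba]
  have hclosed : IsClosed ({t | h t = 0} ∩ Icc a b) := by
    rw [inter_comm]
    exact hh.preimage_isClosed_of_isClosed isClosed_Icc isClosed_singleton
  refine hclosed.Icc_subset_of_forall_mem_nhdsGT_of_Icc_subset ?_ fun t ht hzero => ?_
  · have ha := hle a ⟨le_rfl, hab⟩
    rw [Ioc_self, setIntegral_empty] at ha
    exact le_antisymm ha (hh0 a ⟨le_rfl, hab⟩)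
  have hsub : Ioc t b ⊆ Ioc a b := Ioc_subset_Ioc_left ht.1
  have hG : ContinuousWithinAt (fun x => ∫ s in Ioc t x, K s) (Ioi t) t := by
    refine (intervalIntegral.continuousOn_primitive ?_ t ⟨le_rfl, ht.2.le⟩).mono_of_mem_nhdsWithin
      (Icc_mem_nhdsGT ht.2)
    rw [integrableOn_Icc_iff_integrableOn_Ioc]
    exact hK.mono_set hsub
  have hG0 : Tendsto (fun x => ∫ s in Ioc t x, K s) (𝓝[>] t) (𝓝 0) := by
    simpa using hG.tendsto
  filter_upwards [hG0.eventually_lt_const one_pos, Ioc_mem_nhdsGT ht.2] with x hx1 hx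
  have hsubx : Ioc t x ⊆ Ioc a b := (Ioc_subset_Ioc_right hx.2).trans hsub
  refine eqOn_zero_of_le_integral_mul_of_integral_lt_one (hh.mono (Icc_subset_Icc ht.1 hx.2))
    (fun r hr => hh0 r (Icc_subset_Icc ht.1 hx.2 hr)) (hK.mono_set hsubx)
    (ae_restrict_of_ae_restrict_of_subset hsubx hK0) hx1 (fun r hr => ?_) ⟨hx.1.le, le_rfl⟩
  calc h r ≤ ∫ s in Ioc a r, K s * h s := hle r (Icc_subset_Icc ht.1 hx.2 hr)
    _ = ∫ s in Ioc t r, K s * h s := by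
      refine setIntegral_eq_of_subset_of_forall_sdiff_eq_zero measurableSet_Ioc
        (Ioc_subset_Ioc_left ht.1) fun s hs => ?_
      have hst : s ≤ t := not_lt.1 fun hts => hs.2 ⟨hts, hs.1.2⟩
      rw [hzero ⟨hs.1.1.le, hst⟩, mul_zero]

end Gronwall

theorem integral_Ioc_eq_zero_of_two_mul_inner_le {H : Type*} [NormedAddCommGroup H]
    [InnerProductSpace ℝ H] [CompleteSpace H] {g : ℝ → H} {K : ℝ → ℝ} {a b : ℝ}
    (hg : IntegrableOn g (Ioc a b)) (hK : IntegrableOn K (Ioc a b))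
    (hK0 : ∀ᵐ s ∂volume.restrict (Ioc a b), 0 ≤ K s)
    (hgK : ∀ᵐ s ∂volume.restrict (Ioc a b),
      2 * ⟪g s, ∫ r in Ioc a s, g r⟫ ≤ K s * ‖∫ r in Ioc a s, g r‖ ^ 2) :
    ∀ t ∈ Icc a b, ∫ s in Ioc a t, g s = 0 := by
  set F : ℝ → H := fun s => ∫ r in Ioc a s, g r
  have hF : ContinuousOn F (Icc a b) := by
    refine intervalIntegral.continuousOn_primitive ?_
    rwa [integrableOn_Icc_iff_integrableOn_Ioc]
  have hle : ∀ t ∈ Icc a b, ‖F t‖ ^ 2 ≤ ∫ s in Ioc a t, K s * ‖F s‖ ^ 2 := by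
    intro t ht
    have hsub : Ioc a t ⊆ Ioc a b := Ioc_subset_Ioc_right ht.2
    rw [sq_norm_integral_Ioc_eq (hg.mono_set hsub), ← integral_const_mul]
    refine integral_mono_ae ?_ ?_ (ae_restrict_of_ae_restrict_of_subset hsub hgK)
    · exact ((hg.mono_set hsub).inner_continuousOn_of_subset hF measurableSet_Ioc isCompact_Icc
        (Ioc_subset_Icc_self.trans (Icc_subset_Icc_right ht.2))).const_mul 2
    · exact (hK.mono_set hsub).mul_continuousOn_of_subset (hF.norm.pow 2) measurableSet_Ioc
        isCompact_Icc (Ioc_subset_Icc_self.trans (Icc_subset_Icc_right ht.2))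
  intro t ht
  simpa using eqOn_zero_of_le_integral_mul (hF.norm.pow 2) (fun _ _ => sq_nonneg _) hK hK0 hle ht

theorem two_mul_le_sq_mul_sq_of_add_sq_le {p x y k : ℝ} (h : p + x ^ 2 ≤ k * x * y) :
    2 * p ≤ k ^ 2 * y ^ 2 := by
  nlinarith [sq_nonneg (k * y - 2 * x), sq_nonneg (k * y)]

theorem Real.rpow_mul_rpow_one_sub_le_add {x y γ : ℝ} (hx : 0 ≤ x) (hy : 0 ≤ y) (hγ0 : 0 ≤ γ)
    (hγ1 : γ ≤ 1) : x ^ γ * y ^ (1 - γ) ≤ x + y := by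
  refine (Real.geom_mean_le_arith_mean2_weighted hγ0 (sub_nonneg.2 hγ1) hx hy (by ring)).trans ?_
  nlinarith [mul_nonneg (sub_nonneg.2 hγ1) hx, mul_nonneg hγ0 hy]

section VariationalInequality

variable {V H W : Type*} [NormedAddCommGroup V] [NormedSpace ℝ V]
  [NormedAddCommGroup H] [InnerProductSpace ℝ H] [NormedAddCommGroup W] [NormedSpace ℝ W]
  {ι : V →L[ℝ] H} {a : V →L[ℝ] V →L[ℝ] ℝ} {b : V →L[ℝ] V →L[ℝ] V →L[ℝ] ℝ} {φ : V → EReal}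

/-- `f` and `z'` stand for `f(t)` and `∂ₜz(t)`. -/
def SatisfiesVarIneq (ι : V →L[ℝ] H) (a : V →L[ℝ] V →L[ℝ] ℝ) (b : V →L[ℝ] V →L[ℝ] V →L[ℝ] ℝ)
    (φ : V → EReal) (f z' : H) (z : V) : Prop :=
  ∀ v : V, ((⟪f, ι v - ι z⟫ - ⟪z', ι v - ι z⟫ - a z (v - z) - b z z (v - z) : ℝ) : EReal)
    + φ z ≤ φ v

theorem SatisfiesVarIneq.ne_top {f z' : H} {z : V} (h : SatisfiesVarIneq ι a b φ f z' z)
    (hφ : ∃ v, φ v ≠ ⊤) : φ z ≠ ⊤ := by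
  obtain ⟨v, hv⟩ := hφ
  intro htop
  have := h v
  rw [htop, EReal.coe_add_top] at this
  exact hv (top_le_iff.1 this)

theorem SatisfiesVarIneq.inner_sub_add_le {f u' U' : H} {u U : V}
    (hu : SatisfiesVarIneq ι a b φ f u' u) (hU : SatisfiesVarIneq ι a b φ f U' U)
    (ha : ∀ v : V, a v v = ‖v‖ ^ 2) (hφ : ∃ v, φ v ≠ ⊤) (hφ_bot : ∀ v, φ v ≠ ⊥) :
    ⟪u' - U', ι (u - U)⟫ + ‖u - U‖ ^ 2 + b (u - U) u (u - U) + b U (u - U) (u - U) ≤ 0 := by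
  lift φ u to ℝ using ⟨hu.ne_top hφ, hφ_bot u⟩ with p hp
  lift φ U to ℝ using ⟨hU.ne_top hφ, hφ_bot U⟩ with q hq
  have h1 := hu U
  have h2 := hU u
  rw [← hp, ← hq, ← EReal.coe_add, EReal.coe_le_coe_iff] at h1 h2
  rw [← ha]
  simp only [map_sub, inner_sub_left, inner_sub_right, sub_apply] at h1 h2 ⊢
  linarith

theorem SatisfiesVarIneq.two_mul_inner_sub_le {ιWV : W →L[ℝ] V} {C3 C4 γ : ℝ} {f u' U' : H}
    {u U : V} {uW UW : W} (hu : SatisfiesVarIneq ι a b φ f u' u)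
    (hU : SatisfiesVarIneq ι a b φ f U' U) (ha : ∀ v : V, a v v = ‖v‖ ^ 2)
    (hφ : ∃ v, φ v ≠ ⊤) (hφ_bot : ∀ v, φ v ≠ ⊥)
    (hH3 : ∀ (uw : W) (v : V), ∃ h : H,
      (∀ z : V, b (ιWV uw) v z = ⟪h, ι z⟫) ∧ ‖h‖ ≤ C3 * ‖uw‖ * ‖v‖)
    (hC4 : 0 ≤ C4) (hγ0 : 0 ≤ γ) (hγ1 : γ ≤ 1)
    (hH4 : ∀ (u : V) (vw : W), ∃ h : H,
      (∀ z : V, b u (ιWV vw) z = ⟪h, ι z⟫) ∧ ‖h‖ ≤ C4 * ‖u‖ * ‖ιWV vw‖ ^ γ * ‖vw‖ ^ (1 - γ))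
    (huW : ιWV uW = u) (hUW : ιWV UW = U) :
    2 * ⟪u' - U', ι u - ι U⟫
      ≤ (C4 * (‖ιWV‖ + 1) * ‖uW‖ + C3 * ‖UW‖) ^ 2 * ‖ι u - ι U‖ ^ 2 := by
  subst huW hUW
  set w := ιWV uW - ιWV UW
  obtain ⟨x4, hx4, hx4_le⟩ := hH4 w uW
  obtain ⟨x3, hx3, hx3_le⟩ := hH3 UW w
  have hinterp : ‖ιWV uW‖ ^ γ * ‖uW‖ ^ (1 - γ) ≤ (‖ιWV‖ + 1) * ‖uW‖ := by
    refine (Real.rpow_mul_rpow_one_sub_le_add (norm_nonneg _) (norm_nonneg _) hγ0 hγ1).trans ?_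
    linarith [ιWV.le_opNorm uW]
  have hb4 : |b w (ιWV uW) w| ≤ C4 * (‖ιWV‖ + 1) * ‖uW‖ * ‖w‖ * ‖ι w‖ := calc
    |b w (ιWV uW) w| ≤ ‖x4‖ * ‖ι w‖ := hx4 w ▸ abs_real_inner_le_norm _ _
    _ ≤ C4 * ‖w‖ * (‖ιWV uW‖ ^ γ * ‖uW‖ ^ (1 - γ)) * ‖ι w‖ := by
      gcongr; linarith
    _ ≤ C4 * ‖w‖ * ((‖ιWV‖ + 1) * ‖uW‖) * ‖ι w‖ := by gcongr
    _ = C4 * (‖ιWV‖ + 1) * ‖uW‖ * ‖w‖ * ‖ι w‖ := by ring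
  have hb3 : |b (ιWV UW) w w| ≤ C3 * ‖UW‖ * ‖w‖ * ‖ι w‖ := calc
    |b (ιWV UW) w w| ≤ ‖x3‖ * ‖ι w‖ := hx3 w ▸ abs_real_inner_le_norm _ _
    _ ≤ C3 * ‖UW‖ * ‖w‖ * ‖ι w‖ := by gcongr
  have hmono := hu.inner_sub_add_le hU ha hφ hφ_bot
  rw [← map_sub]
  refine two_mul_le_sq_mul_sq_of_add_sq_le (x := ‖w‖) ?_
  linarith [neg_abs_le (b w (ιWV uW) w), neg_abs_le (b (ιWV UW) w w)]

end VariationalInequality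

theorem uniqueness_strong_solutions_general
    {V H W : Type*}
    [NormedAddCommGroup V] [InnerProductSpace ℝ V]
    [NormedAddCommGroup H] [InnerProductSpace ℝ H] [CompleteSpace H]
    [NormedAddCommGroup W] [InnerProductSpace ℝ W]
    -- Gelfand triple: continuous, dense, compact embedding V ↪ H
    (ι : V →L[ℝ] H)
    -- the space W, densely and compactly embedded in V
    (ιWV : W →L[ℝ] V)
    -- the bilinear form a, with a(v,v) = ‖v‖_V²
    (a : V →L[ℝ] V →L[ℝ] ℝ) (ha : ∀ v : V, a v v = ‖v‖ ^ 2)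
    -- the Navier–Stokes type nonlinearity, as a bounded trilinear form b u v w = ⟨B(u,v),w⟩
    (b : V →L[ℝ] V →L[ℝ] V →L[ℝ] ℝ)
    -- the monotone type nonlinearity φ : convex, proper, lower semicontinuous
    (φ : V → EReal)
    (hφ_proper : ∃ v, φ v ≠ ⊤) (hφ_bot : ∀ v, φ v ≠ ⊥)
    -- (H3): B(u,v) ∈ H with ‖B(u,v)‖_H ≤ C₃‖u‖_W‖v‖_V for u ∈ W, v ∈ V
    (C3 : ℝ)
    (hH3 : ∀ (uw : W) (v : V), ∃ h : H,
      (∀ z : V, b (ιWV uw) v z = (inner ℝ h (ι z) : ℝ)) ∧ ‖h‖ ≤ C3 * ‖uw‖ * ‖v‖)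
    -- (H4): B(u,v) ∈ H with ‖B(u,v)‖_H ≤ C₄‖u‖_V‖v‖_V^γ‖v‖_W^{1−γ} for u ∈ V, v ∈ W
    (C4 γ : ℝ) (hC4 : 0 < C4) (hγ : 0 < γ ∧ γ ≤ 1)
    (hH4 : ∀ (u : V) (vw : W), ∃ h : H,
      (∀ z : V, b u (ιWV vw) z = (inner ℝ h (ι z) : ℝ)) ∧
      ‖h‖ ≤ C4 * ‖u‖ * ‖ιWV vw‖ ^ γ * ‖vw‖ ^ (1 - γ))
    -- data
    (Tstar : ℝ)
    (f : ℝ → H)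
    -- the two solutions and their a.e. derivatives
    (u U : ℝ → V) (u' U' : ℝ → H)
    -- u, U ∈ H¹(0,T*;H): absolutely continuous H-valued primitives of L² derivatives
    (hu'L2 : MemLp u' 2 (volume.restrict (Ioc (0:ℝ) Tstar)))
    (hU'L2 : MemLp U' 2 (volume.restrict (Ioc (0:ℝ) Tstar)))
    (huAC : ∀ t ∈ Icc (0:ℝ) Tstar, ι (u t) = ι (u 0) + ∫ s in Ioc (0:ℝ) t, u' s)
    (hUAC : ∀ t ∈ Icc (0:ℝ) Tstar, ι (U t) = ι (U 0) + ∫ s in Ioc (0:ℝ) t, U' s)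
    -- u, U ∈ L²(0,T*;W)
    (huL2W : ∃ uW : ℝ → W, MemLp uW 2 (volume.restrict (Ioc (0:ℝ) Tstar)) ∧
      ∀ᵐ t ∂(volume.restrict (Ioc (0:ℝ) Tstar)), ιWV (uW t) = u t)
    (hUL2W : ∃ UW : ℝ → W, MemLp UW 2 (volume.restrict (Ioc (0:ℝ) Tstar)) ∧
      ∀ᵐ t ∂(volume.restrict (Ioc (0:ℝ) Tstar)), ιWV (UW t) = U t)
    -- the variational inequalities, a.e. on (0,T*)
    (huVI : ∀ᵐ t ∂(volume.restrict (Ioc (0:ℝ) Tstar)), ∀ v : V,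
      (↑((inner ℝ (f t) (ι v - ι (u t)) : ℝ) - (inner ℝ (u' t) (ι v - ι (u t)) : ℝ)
        - a (u t) (v - u t) - b (u t) (u t) (v - u t)) : EReal) + φ (u t) ≤ φ v)
    (hUVI : ∀ᵐ t ∂(volume.restrict (Ioc (0:ℝ) Tstar)), ∀ v : V,
      (↑((inner ℝ (f t) (ι v - ι (U t)) : ℝ) - (inner ℝ (U' t) (ι v - ι (U t)) : ℝ)
        - a (U t) (v - U t) - b (U t) (U t) (v - U t)) : EReal) + φ (U t) ≤ φ v)
    -- the same initial value
    (hinit : u 0 = U 0) :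
    ∀ t ∈ Icc (0:ℝ) Tstar, ι (u t) = ι (U t) := by
  obtain ⟨uW, huW, huW_eq⟩ := huL2W
  obtain ⟨UW, hUW, hUW_eq⟩ := hUL2W
  have hu' : IntegrableOn u' (Ioc 0 Tstar) := hu'L2.integrable one_le_two
  have hU' : IntegrableOn U' (Ioc 0 Tstar) := hU'L2.integrable one_le_two
  have hdiff : ∀ t ∈ Icc (0:ℝ) Tstar, ι (u t) - ι (U t) = ∫ s in Ioc 0 t, (u' s - U' s) := by
    intro t ht
    have hsub : Ioc 0 t ⊆ Ioc 0 Tstar := Ioc_subset_Ioc_right ht.2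
    rw [huAC t ht, hUAC t ht, hinit, integral_sub (hu'.mono_set hsub) (hU'.mono_set hsub)]
    abel
  have hK : IntegrableOn (fun s => (C4 * (‖ιWV‖ + 1) * ‖uW s‖ + C3 * ‖UW s‖) ^ 2)
      (Ioc 0 Tstar) := ((huW.norm.const_mul _).add (hUW.norm.const_mul _)).integrable_sq
  have henergy : ∀ᵐ s ∂volume.restrict (Ioc 0 Tstar),
      2 * ⟪u' s - U' s, ∫ r in Ioc 0 s, (u' r - U' r)⟫
        ≤ (C4 * (‖ιWV‖ + 1) * ‖uW s‖ + C3 * ‖UW s‖) ^ 2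
          * ‖∫ r in Ioc 0 s, (u' r - U' r)‖ ^ 2 := by
    filter_upwards [huVI, hUVI, huW_eq, hUW_eq, ae_restrict_mem measurableSet_Ioc]
      with s hus hUs huWs hUWs hs
    rw [← hdiff s (Ioc_subset_Icc_self hs)]
    exact SatisfiesVarIneq.two_mul_inner_sub_le hus hUs ha hφ_proper hφ_bot hH3 hC4.le hγ.1.le
      hγ.2 hH4 huWs hUWs
  intro t ht
  exact sub_eq_zero.1 <| (hdiff t ht).trans <| integral_Ioc_eq_zero_of_two_mul_inner_le
    (hu'.sub hU') hK (ae_of_all _ fun _ => sq_nonneg _) henergy t ht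

/-- **Uniqueness of strong solutions** (end of Section 5).  Under (H3)–(H4), two solutions
`u, U ∈ H¹(0,T*;H) ∩ L∞(0,T*;V) ∩ L²(0,T*;W)` of the parabolic variational inequality with
the same data `f` and the same initial value coincide in `H` for all `t ∈ [0,T*]`. -/
theorem uniqueness_strong_solutions
    {V H W : Type*}
    [NormedAddCommGroup V] [InnerProductSpace ℝ V] [CompleteSpace V]
    [NormedAddCommGroup H] [InnerProductSpace ℝ H] [CompleteSpace H]
    [NormedAddCommGroup W] [InnerProductSpace ℝ W] [CompleteSpace W]
    -- Gelfand triple: continuous, dense, compact embedding V ↪ H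
    (ι : V →L[ℝ] H) (hι_inj : Function.Injective ι) (hι_dense : DenseRange ι)
    (hι_cpt : IsCompactOperator (⇑ι))
    -- the space W, densely and compactly embedded in V
    (ιWV : W →L[ℝ] V) (hιWV_inj : Function.Injective ιWV) (hιWV_dense : DenseRange ιWV)
    (hιWV_cpt : IsCompactOperator (⇑ιWV))
    -- the bilinear form a, with a(v,v) = ‖v‖_V²
    (a : V →L[ℝ] V →L[ℝ] ℝ) (ha : ∀ v : V, a v v = ‖v‖ ^ 2)
    -- the Navier–Stokes type nonlinearity, as a bounded trilinear form b u v w = ⟨B(u,v),w⟩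
    (b : V →L[ℝ] V →L[ℝ] V →L[ℝ] ℝ)
    (CB : ℝ) (hCB : 0 < CB) (hb : ∀ u v z : V, |b u v z| ≤ CB * ‖u‖ * ‖v‖ * ‖z‖)
    -- the monotone type nonlinearity φ : convex, proper, lower semicontinuous
    (φ : V → EReal)
    (hφ_conv : ∀ x y : V, ∀ t : ℝ, 0 ≤ t → t ≤ 1 →
      φ (t • x + (1 - t) • y) ≤ (t : EReal) * φ x + ((1 - t : ℝ) : EReal) * φ y)
    (hφ_proper : ∃ v, φ v ≠ ⊤) (hφ_bot : ∀ v, φ v ≠ ⊥)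
    (hφ_lsc : LowerSemicontinuous φ)
    -- (H3): B(u,v) ∈ H with ‖B(u,v)‖_H ≤ C₃‖u‖_W‖v‖_V for u ∈ W, v ∈ V
    (C3 : ℝ) (hC3 : 0 < C3)
    (hH3 : ∀ (uw : W) (v : V), ∃ h : H,
      (∀ z : V, b (ιWV uw) v z = (inner ℝ h (ι z) : ℝ)) ∧ ‖h‖ ≤ C3 * ‖uw‖ * ‖v‖)
    -- (H4): B(u,v) ∈ H with ‖B(u,v)‖_H ≤ C₄‖u‖_V‖v‖_V^γ‖v‖_W^{1−γ} for u ∈ V, v ∈ W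
    (C4 γ : ℝ) (hC4 : 0 < C4) (hγ : 0 < γ ∧ γ ≤ 1)
    (hH4 : ∀ (u : V) (vw : W), ∃ h : H,
      (∀ z : V, b u (ιWV vw) z = (inner ℝ h (ι z) : ℝ)) ∧
      ‖h‖ ≤ C4 * ‖u‖ * ‖ιWV vw‖ ^ γ * ‖vw‖ ^ (1 - γ))
    -- data
    (Tstar : ℝ) (hT : 0 < Tstar)
    (f : ℝ → H) (hf : MemLp f 2 (volume.restrict (Ioc (0:ℝ) Tstar)))
    -- the two solutions and their a.e. derivatives
    (u U : ℝ → V) (u' U' : ℝ → H)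
    -- u, U ∈ H¹(0,T*;H): absolutely continuous H-valued primitives of L² derivatives
    (hu'L2 : MemLp u' 2 (volume.restrict (Ioc (0:ℝ) Tstar)))
    (hU'L2 : MemLp U' 2 (volume.restrict (Ioc (0:ℝ) Tstar)))
    (huAC : ∀ t ∈ Icc (0:ℝ) Tstar, ι (u t) = ι (u 0) + ∫ s in Ioc (0:ℝ) t, u' s)
    (hUAC : ∀ t ∈ Icc (0:ℝ) Tstar, ι (U t) = ι (U 0) + ∫ s in Ioc (0:ℝ) t, U' s)
    -- u, U ∈ L∞(0,T*;V)
    (huLinfty : ∃ C : ℝ, ∀ᵐ t ∂(volume.restrict (Ioc (0:ℝ) Tstar)), ‖u t‖ ≤ C)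
    (hULinfty : ∃ C : ℝ, ∀ᵐ t ∂(volume.restrict (Ioc (0:ℝ) Tstar)), ‖U t‖ ≤ C)
    -- u, U ∈ L²(0,T*;W)
    (huL2W : ∃ uW : ℝ → W, MemLp uW 2 (volume.restrict (Ioc (0:ℝ) Tstar)) ∧
      ∀ᵐ t ∂(volume.restrict (Ioc (0:ℝ) Tstar)), ιWV (uW t) = u t)
    (hUL2W : ∃ UW : ℝ → W, MemLp UW 2 (volume.restrict (Ioc (0:ℝ) Tstar)) ∧
      ∀ᵐ t ∂(volume.restrict (Ioc (0:ℝ) Tstar)), ιWV (UW t) = U t)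
    -- the variational inequalities, a.e. on (0,T*)
    (huVI : ∀ᵐ t ∂(volume.restrict (Ioc (0:ℝ) Tstar)), ∀ v : V,
      (↑((inner ℝ (f t) (ι v - ι (u t)) : ℝ) - (inner ℝ (u' t) (ι v - ι (u t)) : ℝ)
        - a (u t) (v - u t) - b (u t) (u t) (v - u t)) : EReal) + φ (u t) ≤ φ v)
    (hUVI : ∀ᵐ t ∂(volume.restrict (Ioc (0:ℝ) Tstar)), ∀ v : V,
      (↑((inner ℝ (f t) (ι v - ι (U t)) : ℝ) - (inner ℝ (U' t) (ι v - ι (U t)) : ℝ)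
        - a (U t) (v - U t) - b (U t) (U t) (v - U t)) : EReal) + φ (U t) ≤ φ v)
    -- the same initial value
    (hinit : u 0 = U 0) :
    ∀ t ∈ Icc (0:ℝ) Tstar, ι (u t) = ι (U t) :=
  uniqueness_strong_solutions_general ι ιWV a ha b φ hφ_proper hφ_bot C3 hH3 C4 γ hC4 hγ hH4 Tstar f
    u U u' U' hu'L2 hU'L2 huAC hUAC huL2W hUL2W huVI hUVI hinit
end
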